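/- Correctness of the forward-secure TBIDS from a HIBS: if the underlying (1 + ⌈log₂ n⌉)-level HIBS is correct, then for every epoch i ∈ [n] obtained by i successive Update operations from the root key (via the DFEval traversal), every identity id, and every message m, the key sk_{i,id} = HIBS.Del(sk^{(i)}, (binid(i), id)) delegated from the current leaf key sk^{(i)} satisfies Verify(pk, i, id, m, Sign(sk_{i,id}, m)) = 1, because the DFEval traversal yields at step i precisely a correctly delegated HIBS key for identity binid(i). -/

import Mathlib

/-!
Validity of keys and the shape of the traversal are tracked separately. Delegation correctness
alone shows, by induction over the run, that every node/key pair DFEval ever outputs or keeps on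
its stack carries a valid key for its node. Independently of the keys, after the invocation that
outputs the leaf `binid(i)` the stack holds, deepest first, the right siblings of the left turns
on the path `binid(i)`. Writing `binid(i) = p ++ false :: 1ʲ`, the top of the stack is
`p ++ [true]`, and descending leftwards from it reaches `p ++ true :: 0ʲ = binid(i + 1)`.
-/

/-- An abstract hierarchical identity-based signature scheme with explicit
randomness `R`.  `validKey pk id sk` expresses that `sk` is a key for the
hierarchical identity `id` obtained by honest (iterated) delegation from the
master key. -/
structure HIBS (PK SK Id M Sig R : Type) where
  del : SK → List Id → R → SK
  sign : SK → M → R → Sig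
  verify : PK → List Id → M → Sig → Bool
  validKey : PK → List Id → SK → Prop

/-- The `d`-bit binary encoding (most significant bit first) of the index of a
leaf of the complete binary tree of depth `d`; this is `binid(i)`. -/
def leafEnc (d i : ℕ) : List Bool := (List.range d).map fun j => i.testBit (d - 1 - j)

variable {PK SK Id M Sig R BId : Type}

/-- The while-loop of DFEval on node/key pairs: while the current node `w` is
internal, delegate keys for both children (using per-node randomness `rnd`),
push the right child's key onto the stack, and descend to the left child. -/
def dfDescendK (H : HIBS PK SK Id M Sig R) (eb : Bool → Id) (rnd : List Bool → R)
    (d : ℕ) (w : List Bool) (k : SK) (s : List (List Bool × SK)) :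
    (List Bool × SK) × List (List Bool × SK) :=
  if h : w.length < d then
    dfDescendK H eb rnd d (w ++ [false])
      (H.del k ((w ++ [false]).map eb) (rnd (w ++ [false])))
      ((w ++ [true], H.del k ((w ++ [true]).map eb) (rnd (w ++ [true]))) :: s)
  else ((w, k), s)
termination_by d - w.length
decreasing_by simp [List.length_append]; omega

/-- DFEval: pop the topmost node/key pair from the stack and run the descent
loop (the empty-stack case never occurs in the construction). -/
def dfEvalK (H : HIBS PK SK Id M Sig R) (eb : Bool → Id) (rnd : List Bool → R)
    (d : ℕ) (skε : SK) (s : List (List Bool × SK)) :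
    (List Bool × SK) × List (List Bool × SK) :=
  match s with
  | [] => (([], skε), [])
  | (w, k) :: rest => dfDescendK H eb rnd d w k rest

/-- The state after `t` `Update` operations (DFEval invocations) starting from
the stack holding only the master key at the root; the first component is the
leaf node and leaf key produced by the last invocation. -/
def dfRunK (H : HIBS PK SK Id M Sig R) (eb : Bool → Id) (rnd : List Bool → R)
    (d : ℕ) (skε : SK) : ℕ → (List Bool × SK) × List (List Bool × SK)
  | 0 => (([], skε), [([], skε)])
  | t + 1 => dfEvalK H eb rnd d skε (dfRunK H eb rnd d skε t).2

lemma leafEnc_length (d i : ℕ) : (leafEnc d i).length = d := by simp [leafEnc]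

lemma leafEnc_zero (d : ℕ) : leafEnc d 0 = List.replicate d false := by
  simp [leafEnc, List.map_const']

lemma leafEnc_succ (d i : ℕ) : leafEnc (d + 1) i = leafEnc d (i / 2) ++ [i.testBit 0] := by
  simp only [leafEnc, List.range_succ, List.map_append, List.map_cons, List.map_nil,
    Nat.add_sub_cancel, Nat.sub_self]
  congr 1
  refine List.map_congr_left fun j hj => ?_
  rw [Nat.testBit_div_two]
  congr 1
  have := List.mem_range.mp hj
  omega

lemma leafEnc_add_one {d i : ℕ} (h : i + 1 < 2 ^ d) :
    ∃ p j, leafEnc d i = p ++ false :: List.replicate j true ∧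
      leafEnc d (i + 1) = p ++ true :: List.replicate j false := by
  induction d generalizing i with
  | zero => simp at h
  | succ d ih =>
    rcases Nat.even_or_odd' i with ⟨q, rfl | rfl⟩
    · refine ⟨leafEnc d q, 0, ?_, ?_⟩
      · simp [leafEnc_succ, Nat.testBit_zero]
      · rw [leafEnc_succ, show (2 * q + 1) / 2 = q by omega]
        simp [Nat.testBit_zero]
    · obtain ⟨p, j, hi, hi'⟩ := ih (i := q) (by rw [pow_succ] at h; omega)
      refine ⟨p, j + 1, ?_, ?_⟩
      · rw [leafEnc_succ, show (2 * q + 1) / 2 = q by omega, hi]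
        simp [Nat.testBit_zero, List.replicate_succ']
      · rw [leafEnc_succ, show (2 * q + 1 + 1) / 2 = q + 1 by omega, hi']
        simp [Nat.testBit_zero, List.replicate_succ', show (2 * q + 1 + 1) % 2 = 0 by omega]

/-- `pendingNodes w v` lists, deepest first, the right siblings still on the DFEval stack once the
traversal has walked the path `v` below the node `w`. -/
def pendingNodes : List Bool → List Bool → List (List Bool)
  | _, [] => []
  | w, false :: v => pendingNodes (w ++ [false]) v ++ [w ++ [true]]
  | w, true :: v => pendingNodes (w ++ [true]) v

lemma pendingNodes_append (w u v : List Bool) :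
    pendingNodes w (u ++ v) = pendingNodes (w ++ u) v ++ pendingNodes w u := by
  induction u generalizing w with
  | nil => simp [pendingNodes]
  | cons b u ih => cases b <;> simp [pendingNodes, ih]

lemma pendingNodes_replicate_true (w : List Bool) (j : ℕ) :
    pendingNodes w (List.replicate j true) = [] := by
  induction j generalizing w with
  | zero => rfl
  | succ j ih => simp [List.replicate_succ, pendingNodes, ih]

section Traversal

variable (H : HIBS PK SK Id M Sig R) (eb : Bool → Id) (rnd : List Bool → R) (d : ℕ)

lemma dfDescendK_leaf (w : List Bool) (k : SK) (s : List (List Bool × SK)) :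
    (dfDescendK H eb rnd d w k s).1.1 = w ++ List.replicate (d - w.length) false := by
  induction w, k, s using dfDescendK.induct H eb rnd d with
  | case1 w k s hw ih =>
    rw [dfDescendK, dif_pos hw, ih, List.length_append, List.length_singleton,
      List.append_assoc, List.singleton_append, ← List.replicate_succ]
    congr 2
    omega
  | case2 w k s hw =>
    rw [dfDescendK, dif_neg hw, Nat.sub_eq_zero_of_le (not_lt.mp hw), List.replicate_zero,
      List.append_nil]

lemma dfDescendK_stack_nodes (w : List Bool) (k : SK) (s : List (List Bool × SK)) :
    (dfDescendK H eb rnd d w k s).2.map Prod.fst =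
      pendingNodes w (List.replicate (d - w.length) false) ++ s.map Prod.fst := by
  induction w, k, s using dfDescendK.induct H eb rnd d with
  | case1 w k s hw ih =>
    rw [dfDescendK, dif_pos hw, ih, List.length_append, List.length_singleton,
      show d - w.length = d - (w.length + 1) + 1 by omega, List.replicate_succ, pendingNodes]
    simp
  | case2 w k s hw =>
    rw [dfDescendK, dif_neg hw, Nat.sub_eq_zero_of_le (not_lt.mp hw)]
    rfl

lemma dfEvalK_nodes (skε : SK) {s : List (List Bool × SK)} {w : List Bool}
    {ns : List (List Bool)} (hs : s.map Prod.fst = w :: ns) :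
    (dfEvalK H eb rnd d skε s).1.1 = w ++ List.replicate (d - w.length) false ∧
      (dfEvalK H eb rnd d skε s).2.map Prod.fst =
        pendingNodes w (List.replicate (d - w.length) false) ++ ns := by
  obtain _ | ⟨⟨w', k⟩, rest⟩ := s
  · cases hs
  · obtain ⟨rfl, rfl⟩ := List.cons_eq_cons.mp hs
    exact ⟨dfDescendK_leaf H eb rnd d w' k rest, dfDescendK_stack_nodes H eb rnd d w' k rest⟩

lemma dfRunK_succ_nodes (skε : SK) {i : ℕ} (hi : i < 2 ^ d) :
    (dfRunK H eb rnd d skε (i + 1)).1.1 = leafEnc d i ∧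
      (dfRunK H eb rnd d skε (i + 1)).2.map Prod.fst = pendingNodes [] (leafEnc d i) := by
  induction i with
  | zero =>
    simpa [dfRunK, leafEnc_zero] using dfEvalK_nodes H eb rnd d skε (s := [([], skε)]) rfl
  | succ i ih =>
    obtain ⟨p, j, hi, hi'⟩ := leafEnc_add_one hi
    have hd : (p ++ false :: List.replicate j true).length = d := hi ▸ leafEnc_length d i
    have hstack : (dfRunK H eb rnd d skε (i + 1)).2.map Prod.fst =
        (p ++ [true]) :: pendingNodes [] p := by
      rw [(ih (by omega)).2, hi, pendingNodes_append]
      simp [pendingNodes, pendingNodes_replicate_true]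
    obtain ⟨hleaf, hrest⟩ := dfEvalK_nodes H eb rnd d skε hstack
    have hj : d - (p ++ [true]).length = j := by
      simp only [List.length_append, List.length_cons, List.length_replicate, List.length_nil,
        zero_add] at hd ⊢
      omega
    rw [hj] at hleaf hrest
    refine ⟨hleaf.trans ?_, hrest.trans ?_⟩
    · simp [hi']
    · simp [hi', pendingNodes_append, pendingNodes]

end Traversal

def KeysValid (H : HIBS PK SK Id M Sig R) (eb : Bool → Id) (pk : PK)
    (s : List (List Bool × SK)) : Prop :=
  ∀ x ∈ s, H.validKey pk (x.1.map eb) x.2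

section Validity

variable {H : HIBS PK SK Id M Sig R} {eb : Bool → Id} {pk : PK} (rnd : List Bool → R) (d : ℕ)

lemma dfDescendK_keysValid
    (hdel : ∀ (p : PK) (id id' : List Id) (sk : SK) (r : R),
      H.validKey p id sk → id <+: id' → H.validKey p id' (H.del sk id' r))
    {w : List Bool} {k : SK} {s : List (List Bool × SK)}
    (hk : H.validKey pk (w.map eb) k) (hs : KeysValid H eb pk s) :
    KeysValid H eb pk ((dfDescendK H eb rnd d w k s).1 :: (dfDescendK H eb rnd d w k s).2) := by
  induction w, k, s using dfDescendK.induct H eb rnd d with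
  | case1 w k s hw ih =>
    have hchild (b : Bool) := hdel pk _ ((w ++ [b]).map eb) k (rnd (w ++ [b])) hk
      (by rw [List.map_append]; exact List.prefix_append _ _)
    rw [dfDescendK, dif_pos hw]
    exact ih (hchild false) (List.forall_mem_cons.mpr ⟨hchild true, hs⟩)
  | case2 w k s hw =>
    rw [dfDescendK, dif_neg hw]
    exact List.forall_mem_cons.mpr ⟨hk, hs⟩

lemma dfEvalK_keysValid (skε : SK) (hmaster : H.validKey pk [] skε)
    (hdel : ∀ (p : PK) (id id' : List Id) (sk : SK) (r : R),
      H.validKey p id sk → id <+: id' → H.validKey p id' (H.del sk id' r))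
    {s : List (List Bool × SK)} (hs : KeysValid H eb pk s) :
    KeysValid H eb pk ((dfEvalK H eb rnd d skε s).1 :: (dfEvalK H eb rnd d skε s).2) := by
  obtain _ | ⟨⟨w, k⟩, rest⟩ := s
  · simp [dfEvalK, KeysValid, hmaster]
  · obtain ⟨hk, hrest⟩ := List.forall_mem_cons.mp hs
    exact dfDescendK_keysValid rnd d hdel hk hrest

lemma dfRunK_keysValid (skε : SK) (hmaster : H.validKey pk [] skε)
    (hdel : ∀ (p : PK) (id id' : List Id) (sk : SK) (r : R),
      H.validKey p id sk → id <+: id' → H.validKey p id' (H.del sk id' r)) (t : ℕ) :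
    KeysValid H eb pk ((dfRunK H eb rnd d skε t).1 :: (dfRunK H eb rnd d skε t).2) := by
  induction t with
  | zero => simp [dfRunK, KeysValid, hmaster]
  | succ t ih =>
    exact dfEvalK_keysValid rnd d skε hmaster hdel (List.forall_mem_cons.mp ih).2

end Validity

/-- Correctness of the forward-secure TBIDS from a `(1 + d)`-level HIBS: if the
HIBS is correct (valid keys sign verifying signatures, and delegation along
prefixes of honest keys yields honest keys), then for every epoch `i < 2^d`
obtained by `i + 1` successive DFEval invocations from the root key, every
identity `id` and every message `m`, the key delegated from the current leaf
key for the identity `(binid(i), id)` produces signatures that verify —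
because the DFEval traversal yields at step `i` precisely a correctly delegated
HIBS key for `binid(i)`. -/
theorem fs_tbids_correct
    (H : HIBS PK SK Id M Sig R) (eb : Bool → Id) (idf : BId → Id)
    (rnd : List Bool → R) (d : ℕ) (pk : PK) (skε : SK)
    (hmaster : H.validKey pk [] skε)
    (hdel : ∀ (p : PK) (id id' : List Id) (sk : SK) (r : R),
      H.validKey p id sk → id <+: id' → H.validKey p id' (H.del sk id' r))
    (hcorr : ∀ (p : PK) (id : List Id) (sk : SK) (m : M) (r : R),
      H.validKey p id sk → H.verify p id m (H.sign sk m r) = true)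
    (i : ℕ) (hi : i < 2 ^ d) (id : BId) (m : M) (r r' : R) :
    H.verify pk ((leafEnc d i).map eb ++ [idf id]) m
      (H.sign
        (H.del ((dfRunK H eb rnd d skε (i + 1)).1.2)
          ((leafEnc d i).map eb ++ [idf id]) r)
        m r') = true := by
  have hleaf : H.validKey pk ((leafEnc d i).map eb) (dfRunK H eb rnd d skε (i + 1)).1.2 := by
    rw [← (dfRunK_succ_nodes H eb rnd d skε hi).1]
    exact dfRunK_keysValid rnd d skε hmaster hdel (i + 1) _ List.mem_cons_self
  exact hcorr pk _ _ m r' (hdel pk _ _ _ r hleaf (List.prefix_append _ _))
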